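/- Let P = (X,≺) be a finite poset with n elements and z₁ ≺ z₂ ≺ z₃ distinct, and suppose F(k,ℓ)·F(k+2,ℓ) > 0 for some k,ℓ ≥ 1. Then F(k+1,ℓ)² ≤ 2nℓ²k · F(k,ℓ)·F(k+2,ℓ). -/

import Mathlib

/-- The number of linear extensions `L` of a finite poset `X`
(order-preserving bijections `X ≃ Fin (card X)`) such that
`L z₂ − L z₁ = k` and `L z₃ − L z₂ = l`. -/
noncomputable def F (X : Type) [PartialOrder X] [Fintype X] (z₁ z₂ z₃ : X) (k l : ℕ) : ℕ :=
  Nat.card {L : X ≃ Fin (Fintype.card X) // (∀ a b : X, a < b → L a < L b) ∧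
    (L z₂ : ℕ) = (L z₁ : ℕ) + k ∧ (L z₃ : ℕ) = (L z₂ : ℕ) + l}

/-!
The claim is the product of two ratio bounds, `F(k+1,l) ≤ 2kl·F(k,l)` and
`F(k+1,l) ≤ nl·F(k+2,l)`. For each, a linear extension with gaps `(k+1, l)` is turned into one
with gaps `(k, l)` (resp. `(k+2, l)`) by moving one or two elements past `z₁`, `z₂` or `z₃`, and
it is recovered from the result together with one of `2kl` (resp. `nl`) choices of data. Each
moved element is the first or last, in position, of those not above (resp. below) the element
it is moved past, so it is incomparable to everything it jumps and the result is still a linear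
extension. That such an element exists is a pigeonhole count against a linear extension with
the target gaps, which is where `F(k,l)·F(k+2,l) > 0` is used.
-/

section Slide

variable {n : ℕ}

def slidePos (a b j : ℕ) : ℕ :=
  if j = a then b else if a < j ∧ j ≤ b then j - 1 else if b ≤ j ∧ j < a then j + 1 else j

lemma slidePos_lt {a b j : ℕ} (ha : a < n) (hb : b < n) (hj : j < n) : slidePos a b j < n := by
  unfold slidePos; split_ifs <;> omega

lemma slidePos_slidePos (a b j : ℕ) : slidePos b a (slidePos a b j) = j := by
  unfold slidePos; split_ifs <;> omega

/-- Moves the entry at position `a` to position `b`, shifting the entries in between by one;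
the identity if `a` or `b` is out of range. -/
def slide (a b : ℕ) : Equiv.Perm (Fin n) :=
  if h : a < n ∧ b < n then
    { toFun := fun j => ⟨slidePos a b j, slidePos_lt h.1 h.2 j.2⟩
      invFun := fun j => ⟨slidePos b a j, slidePos_lt h.2 h.1 j.2⟩
      left_inv := fun j => Fin.ext (slidePos_slidePos a b j)
      right_inv := fun j => Fin.ext (slidePos_slidePos b a j) }
  else 1

lemma slide_apply {a b : ℕ} (ha : a < n) (hb : b < n) (j : Fin n) :
    (slide a b j : ℕ) = slidePos a b j := by
  rw [slide, dif_pos ⟨ha, hb⟩]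
  rfl

lemma slide_symm (a b : ℕ) : (slide a b : Equiv.Perm (Fin n)).symm = slide b a := by
  by_cases h : a < n ∧ b < n
  · rw [slide, slide, dif_pos h, dif_pos h.symm]
    rfl
  · rw [slide, slide, dif_neg h, dif_neg (h ∘ And.symm)]
    rfl

lemma slide_trans_slide {a b c : ℕ} (ha : a < n) (hb : b < n) (hc : c < n) :
    (slide a b).trans (slide b c) = (slide a c : Equiv.Perm (Fin n)) := by
  ext j
  simp only [Equiv.trans_apply, slide_apply, ha, hb, hc, slidePos]
  split_ifs <;> omega

lemma trans_slide_trans_slide_swap {α : Sort*} (L : α ≃ Fin n) (a b : ℕ) :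
    (L.trans (slide a b)).trans (slide b a) = L := by
  rw [Equiv.trans_assoc, ← slide_symm a b, Equiv.self_trans_symm, Equiv.trans_refl]

lemma trans_slide_apply {α : Sort*} (L : α ≃ Fin n) (x z u : α) :
    ((L.trans (slide (L x) (L z))) u : ℕ) = slidePos (L x) (L z) (L u) :=
  slide_apply (L x).2 (L z).2 (L u)

end Slide

section LinearExtension

variable {X : Type*} [PartialOrder X] {n : ℕ}

def IsLinExt (L : X ≃ Fin n) : Prop := ∀ a b : X, a < b → L a < L b

def IsLinExtWithGaps (z₁ z₂ z₃ : X) (k l : ℕ) (L : X ≃ Fin n) : Prop :=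
  IsLinExt L ∧ (L z₂ : ℕ) = L z₁ + k ∧ (L z₃ : ℕ) = L z₂ + l

lemma IsLinExt.val_lt {L : X ≃ Fin n} (hL : IsLinExt L) {a b : X} (h : a < b) :
    (L a : ℕ) < L b :=
  hL a b h

theorem IsLinExt.trans_slide {L : X ≃ Fin n} (hL : IsLinExt L) {x : X} {p : ℕ} (hp : p < n)
    (hup : ∀ u, (L x : ℕ) < L u → (L u : ℕ) ≤ p → ¬ x < u)
    (hdown : ∀ u, p ≤ (L u : ℕ) → (L u : ℕ) < L x → ¬ u < x) :
    IsLinExt (L.trans (slide (L x) p)) := by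
  intro a b hab
  have hlt := hL.val_lt hab
  rw [Fin.lt_def, Equiv.trans_apply, Equiv.trans_apply, slide_apply (L x).2 hp,
    slide_apply (L x).2 hp]
  unfold slidePos
  by_cases ha : a = x
  · subst ha
    have : ¬ (L b : ℕ) ≤ p := fun h => hup b hlt h hab
    split_ifs <;> omega
  by_cases hb : b = x
  · subst hb
    have : ¬ p ≤ (L a : ℕ) := fun h => hdown a h hlt hab
    split_ifs <;> omega
  have := Fin.val_injective.ne (L.injective.ne ha)
  have := Fin.val_injective.ne (L.injective.ne hb)
  split_ifs <;> omega

theorem IsLinExt.trans_slide_up {L : X ≃ Fin n} (hL : IsLinExt L) {x z : X}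
    (hxz : (L x : ℕ) < L z) (hx : ¬ x < z) (h : ∀ u, (L x : ℕ) < L u → (L u : ℕ) < L z → u < z) :
    IsLinExt (L.trans (slide (L x) (L z))) := by
  refine hL.trans_slide (L z).2 (fun u hxu huz hlt => ?_) (fun u h₁ h₂ _ => by omega)
  rcases huz.lt_or_eq with huz | huz
  · exact hx (hlt.trans (h u hxu huz))
  · exact hx (L.injective (Fin.ext huz) ▸ hlt)

theorem IsLinExt.trans_slide_down {L : X ≃ Fin n} (hL : IsLinExt L) {x z : X}
    (hzx : (L z : ℕ) < L x) (hx : ¬ z < x) (h : ∀ u, (L z : ℕ) < L u → (L u : ℕ) < L x → z < u) :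
    IsLinExt (L.trans (slide (L x) (L z))) := by
  refine hL.trans_slide (L z).2 (fun u h₁ h₂ _ => by omega) (fun u hzu hux hlt => ?_)
  rcases hzu.lt_or_eq with hzu | hzu
  · exact hx ((h u hzu hux).trans hlt)
  · exact hx (L.injective (Fin.ext hzu) ▸ hlt)

lemma exists_first_not_gt (L : X ≃ Fin n) (z : X) (b : ℕ)
    (h : ∃ u, (L z : ℕ) < L u ∧ (L u : ℕ) < b ∧ ¬ z < u) :
    ∃ x, (L z : ℕ) < L x ∧ (L x : ℕ) < b ∧ ¬ z < x ∧
      ∀ u, (L z : ℕ) < L u → (L u : ℕ) < L x → z < u := by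
  have : Finite X := .of_equiv _ L.symm
  obtain ⟨x, ⟨hzx, hxb, hx⟩, hmin⟩ :=
    Set.exists_min_image _ (fun u => (L u : ℕ)) (Set.toFinite _) h
  refine ⟨x, hzx, hxb, hx, fun u hzu hux => by_contra fun hu => ?_⟩
  exact (hmin u ⟨hzu, hux.trans hxb, hu⟩).not_gt hux

lemma exists_last_not_lt (L : X ≃ Fin n) (z : X) (a : ℕ)
    (h : ∃ u, a ≤ (L u : ℕ) ∧ (L u : ℕ) < L z ∧ ¬ u < z) :
    ∃ x, a ≤ (L x : ℕ) ∧ (L x : ℕ) < L z ∧ ¬ x < z ∧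
      ∀ u, (L x : ℕ) < L u → (L u : ℕ) < L z → u < z := by
  have : Finite X := .of_equiv _ L.symm
  obtain ⟨x, ⟨hax, hxz, hx⟩, hmax⟩ :=
    Set.exists_max_image _ (fun u => (L u : ℕ)) (Set.toFinite _) h
  refine ⟨x, hax, hxz, hx, fun u hxu huz => by_contra fun hu => ?_⟩
  exact (hmax u ⟨hax.trans hxu.le, huz, hu⟩).not_gt hxu

lemma card_le_card_of_forall_mem {Y : Type*} (L M : Y ≃ Fin n) {s t : Finset (Fin n)}
    (h : ∀ u, L u ∈ s → M u ∈ t) : s.card ≤ t.card :=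
  Finset.card_le_card_of_injOn (fun m => M (L.symm m))
    (fun m hm => h _ (by simpa using hm)) (M.injective.comp L.symm.injective).injOn

lemma IsLinExt.sub_le_sub_of_forall_between {L M : X ≃ Fin n} (hM : IsLinExt M) {a b : X}
    (hab : a < b) (h : ∀ u, (L a : ℕ) < L u → (L u : ℕ) < L b → a < u ∧ u < b) :
    (L b : ℕ) - L a ≤ M b - M a := by
  have hcard := card_le_card_of_forall_mem L M (s := .Ioo (L a) (L b)) (t := .Ioo (M a) (M b))
    fun u hu => by
      rw [Finset.mem_Ioo] at hu ⊢
      exact ⟨hM _ _ (h u hu.1 hu.2).1, hM _ _ (h u hu.1 hu.2).2⟩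
  rw [Fin.card_Ioo, Fin.card_Ioo] at hcard
  have := hM.val_lt hab
  omega

lemma IsLinExt.sub_le_sub_of_forall_outside {L M : X ≃ Fin n} (hL : IsLinExt L)
    (hM : IsLinExt M) {a b : X} (hab : a < b) (ha : ∀ u, (L u : ℕ) < L a → u < a)
    (hb : ∀ u, (L b : ℕ) < L u → b < u) :
    (M b : ℕ) - M a ≤ L b - L a := by
  have hcard := card_le_card_of_forall_mem M L (s := .Ioo (M a) (M b)) (t := .Ioo (L a) (L b))
    fun u hu => by
      rw [Finset.mem_Ioo, Fin.lt_def, Fin.lt_def] at hu ⊢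
      have hua : u ≠ a := by rintro rfl; omega
      have hub : u ≠ b := by rintro rfl; omega
      have := Fin.val_injective.ne (L.injective.ne hua)
      have := Fin.val_injective.ne (L.injective.ne hub)
      have : ¬ (L u : ℕ) < L a := fun h => by have := hM.val_lt (ha u h); omega
      have : ¬ (L b : ℕ) < L u := fun h => by have := hM.val_lt (hb u h); omega
      omega
  rw [Fin.card_Ioo, Fin.card_Ioo] at hcard
  have := hL.val_lt hab
  have := hM.val_lt hab
  omega

end LinearExtension

section WidenGap

variable {X : Type*} {n k l : ℕ} (z₁ z₂ z₃ : X)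

/-- Inverse of the moves made in `exists_widenGap_eq`. The element just before `z₁` (`b = false`)
or just after `z₃` (`b = true`) is moved to offset `t + 1` behind `z₂`; then the element just
behind `z₂` is moved to offset `i + 1` behind `z₁`. -/
def widenGap (L : X ≃ Fin n) (b : Bool) (i : Fin k) (t : Fin l) : X ≃ Fin n :=
  if b then (L.trans (slide (L z₃ + 1) (L z₂ + 1 + t))).trans (slide (L z₂ + 1) (L z₁ + i + 1))
  else (L.trans (slide (L z₁ - 1) (L z₂ + t))).trans (slide (L z₂) (L z₁ + i))

variable {z₁ z₂ z₃}

lemma widenGap_false_eq {L L' : X ≃ Fin n} {a b c d : ℕ} {i : Fin k} {t : Fin l}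
    (hL' : L' = (L.trans (slide a b)).trans (slide c d)) (h₁ : (L' z₁ : ℕ) - 1 = d)
    (h₂ : (L' z₂ : ℕ) + t = c) (h₃ : (L' z₂ : ℕ) = b) (h₄ : (L' z₁ : ℕ) + i = a) :
    widenGap z₁ z₂ z₃ L' false i t = L := by
  rw [widenGap, if_neg Bool.false_ne_true, h₁, h₂, h₃, h₄, hL', trans_slide_trans_slide_swap,
    trans_slide_trans_slide_swap]

lemma widenGap_true_eq {L L' : X ≃ Fin n} {a b c d : ℕ} {i : Fin k} {t : Fin l}
    (hL' : L' = (L.trans (slide a b)).trans (slide c d)) (h₁ : (L' z₃ : ℕ) + 1 = d)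
    (h₂ : (L' z₂ : ℕ) + 1 + t = c) (h₃ : (L' z₂ : ℕ) + 1 = b) (h₄ : (L' z₁ : ℕ) + i + 1 = a) :
    widenGap z₁ z₂ z₃ L' true i t = L := by
  rw [widenGap, if_pos rfl, h₁, h₂, h₃, h₄, hL', trans_slide_trans_slide_swap,
    trans_slide_trans_slide_swap]

end WidenGap

section WidenGapCases

variable {X : Type*} [PartialOrder X] {n k l : ℕ} {z₁ z₂ z₃ : X} {L : X ≃ Fin n}

lemma exists_widenGap_eq_of_not_gt (hL : IsLinExt L) (h₂ : (L z₂ : ℕ) = L z₁ + (k + 1))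
    (h₃ : (L z₃ : ℕ) = L z₂ + l) (h23 : z₂ < z₃) {x : X} (hx₁ : (L z₁ : ℕ) < L x)
    (hx₂ : (L x : ℕ) < L z₂) (hx : ¬ z₁ < x)
    (hfirst : ∀ u, (L z₁ : ℕ) < L u → (L u : ℕ) < L x → z₁ < u) :
    ∃ L', IsLinExtWithGaps z₁ z₂ z₃ k l L' ∧
      ∃ (b : Bool) (i : Fin k) (t : Fin l), widenGap z₁ z₂ z₃ L' b i t = L := by
  have h23' := hL.val_lt h23
  obtain ⟨L', hL'⟩ : ∃ L', L' = L.trans (slide (L x) (L z₁)) := ⟨_, rfl⟩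
  obtain ⟨e₁, e₂, e₃⟩ : (L' z₁ : ℕ) = L z₁ + 1 ∧ (L' z₂ : ℕ) = L z₂ ∧ (L' z₃ : ℕ) = L z₃ := by
    simp only [hL', trans_slide_apply, slidePos]
    refine ⟨?_, ?_, ?_⟩ <;> split_ifs <;> omega
  have hL'' : L' = (L.trans (slide (L x) (L z₂))).trans (slide (L z₂) (L z₁)) := by
    rw [hL', Equiv.trans_assoc, slide_trans_slide (L x).2 (L z₂).2 (L z₁).2]
  obtain ⟨i, hi⟩ : ∃ i : Fin k, (i : ℕ) = L x - L z₁ - 1 := ⟨⟨_, by omega⟩, rfl⟩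
  obtain ⟨t, ht⟩ : ∃ t : Fin l, (t : ℕ) = 0 := ⟨⟨0, by omega⟩, rfl⟩
  refine ⟨L', ⟨hL' ▸ hL.trans_slide_down hx₁ hx hfirst, by omega, by omega⟩, false, i, t,
    widenGap_false_eq hL'' ?_ ?_ ?_ ?_⟩ <;> omega

lemma exists_widenGap_eq_of_not_lt (hL : IsLinExt L) (h₂ : (L z₂ : ℕ) = L z₁ + (k + 1))
    (h₃ : (L z₃ : ℕ) = L z₂ + l) (h23 : z₂ < z₃) {v : X} (hv₁ : (L z₁ : ℕ) < L v)
    (hv₂ : (L v : ℕ) < L z₂) (hv : ¬ v < z₃)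
    (hlast : ∀ u, (L v : ℕ) < L u → (L u : ℕ) < L z₃ → u < z₃) :
    ∃ L', IsLinExtWithGaps z₁ z₂ z₃ k l L' ∧
      ∃ (b : Bool) (i : Fin k) (t : Fin l), widenGap z₁ z₂ z₃ L' b i t = L := by
  have h23' := hL.val_lt h23
  obtain ⟨L', hL'⟩ : ∃ L', L' = L.trans (slide (L v) (L z₃)) := ⟨_, rfl⟩
  obtain ⟨e₁, e₂, e₃⟩ : (L' z₁ : ℕ) = L z₁ ∧ (L' z₂ : ℕ) = L z₂ - 1 ∧ (L' z₃ : ℕ) = L z₃ - 1 := by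
    simp only [hL', trans_slide_apply, slidePos]
    refine ⟨?_, ?_, ?_⟩ <;> split_ifs <;> omega
  have hL'' : L' = (L.trans (slide (L v) (L z₂))).trans (slide (L z₂) (L z₃)) := by
    rw [hL', Equiv.trans_assoc, slide_trans_slide (L v).2 (L z₂).2 (L z₃).2]
  obtain ⟨i, hi⟩ : ∃ i : Fin k, (i : ℕ) = L v - L z₁ - 1 := ⟨⟨_, by omega⟩, rfl⟩
  obtain ⟨t, ht⟩ : ∃ t : Fin l, (t : ℕ) = 0 := ⟨⟨0, by omega⟩, rfl⟩
  refine ⟨L', ⟨hL' ▸ hL.trans_slide_up (by omega) hv hlast, by omega, by omega⟩, true, i, t,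
    widenGap_true_eq hL'' ?_ ?_ ?_ ?_⟩ <;> omega

lemma exists_widenGap_eq_of_not_lt_of_not_lt (hL : IsLinExt L)
    (h₂ : (L z₂ : ℕ) = L z₁ + (k + 1)) (h₃ : (L z₃ : ℕ) = L z₂ + l) {x v : X}
    (hx₁ : (L z₁ : ℕ) < L x) (hx₂ : (L x : ℕ) < L z₂) (hx : ¬ x < z₂)
    (hxlast : ∀ u, (L x : ℕ) < L u → (L u : ℕ) < L z₂ → u < z₂)
    (hv₂ : (L z₂ : ℕ) < L v) (hv₃ : (L v : ℕ) < L z₃) (hv : ¬ v < z₃)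
    (hvlast : ∀ u, (L v : ℕ) < L u → (L u : ℕ) < L z₃ → u < z₃) :
    ∃ L', IsLinExtWithGaps z₁ z₂ z₃ k l L' ∧
      ∃ (b : Bool) (i : Fin k) (t : Fin l), widenGap z₁ z₂ z₃ L' b i t = L := by
  obtain ⟨L₁, hL₁⟩ : ∃ L₁, L₁ = L.trans (slide (L x) (L z₂)) := ⟨_, rfl⟩
  have hpos₁ (u : X) : (L₁ u : ℕ) = slidePos (L x) (L z₂) (L u) := hL₁ ▸ trans_slide_apply ..
  obtain ⟨f₁, f₂, f₃, fv⟩ : (L₁ z₁ : ℕ) = L z₁ ∧ (L₁ z₂ : ℕ) = L z₂ - 1 ∧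
      (L₁ z₃ : ℕ) = L z₃ ∧ (L₁ v : ℕ) = L v := by
    simp only [hpos₁, slidePos]
    refine ⟨?_, ?_, ?_, ?_⟩ <;> split_ifs <;> omega
  have hLin₁ : IsLinExt L₁ := hL₁ ▸ hL.trans_slide_up hx₂ hx hxlast
  obtain ⟨L', hL'⟩ : ∃ L', L' = L₁.trans (slide (L₁ v) (L₁ z₃)) := ⟨_, rfl⟩
  have hpos' (u : X) : (L' u : ℕ) = slidePos (L₁ v) (L₁ z₃) (L₁ u) := hL' ▸ trans_slide_apply ..
  have hL'' : L' = (L.trans (slide (L x) (L z₂))).trans (slide (L₁ v) (L₁ z₃)) := by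
    rw [hL', ← hL₁]
  obtain ⟨e₁, e₂, e₃⟩ : (L' z₁ : ℕ) = L z₁ ∧ (L' z₂ : ℕ) = L z₂ - 1 ∧ (L' z₃ : ℕ) = L z₃ - 1 := by
    simp only [hpos', f₁, f₂, f₃, fv, slidePos]
    refine ⟨?_, ?_, ?_⟩ <;> split_ifs <;> omega
  have hLin' : IsLinExt L' := hL' ▸ hLin₁.trans_slide_up (by omega) hv fun u h₁ h₂ => by
    have := hpos₁ u
    rw [slidePos] at this
    refine hvlast u ?_ ?_ <;> split_ifs at this <;> omega
  obtain ⟨i, hi⟩ : ∃ i : Fin k, (i : ℕ) = L x - L z₁ - 1 := ⟨⟨_, by omega⟩, rfl⟩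
  obtain ⟨t, ht⟩ : ∃ t : Fin l, (t : ℕ) = L v - L z₂ := ⟨⟨_, by omega⟩, rfl⟩
  refine ⟨L', ⟨hLin', by omega, by omega⟩, true, i, t,
    widenGap_true_eq hL'' ?_ ?_ ?_ ?_⟩ <;> omega

lemma exists_widenGap_eq_of_not_lt_of_not_gt (hL : IsLinExt L)
    (h₂ : (L z₂ : ℕ) = L z₁ + (k + 1)) (h₃ : (L z₃ : ℕ) = L z₂ + l) {x w : X}
    (hx₁ : (L z₁ : ℕ) < L x) (hx₂ : (L x : ℕ) < L z₂) (hx : ¬ x < z₂)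
    (hxlast : ∀ u, (L x : ℕ) < L u → (L u : ℕ) < L z₂ → u < z₂)
    (hw₂ : (L z₂ : ℕ) < L w) (hw₃ : (L w : ℕ) < L z₃) (hw : ¬ z₁ < w)
    (hwfirst : ∀ u, (L z₁ : ℕ) < L u → (L u : ℕ) < L w → z₁ < u) :
    ∃ L', IsLinExtWithGaps z₁ z₂ z₃ k l L' ∧
      ∃ (b : Bool) (i : Fin k) (t : Fin l), widenGap z₁ z₂ z₃ L' b i t = L := by
  obtain ⟨L₁, hL₁⟩ : ∃ L₁, L₁ = L.trans (slide (L x) (L z₂)) := ⟨_, rfl⟩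
  have hpos₁ (u : X) : (L₁ u : ℕ) = slidePos (L x) (L z₂) (L u) := hL₁ ▸ trans_slide_apply ..
  obtain ⟨f₁, f₂, f₃, fw⟩ : (L₁ z₁ : ℕ) = L z₁ ∧ (L₁ z₂ : ℕ) = L z₂ - 1 ∧
      (L₁ z₃ : ℕ) = L z₃ ∧ (L₁ w : ℕ) = L w := by
    simp only [hpos₁, slidePos]
    refine ⟨?_, ?_, ?_, ?_⟩ <;> split_ifs <;> omega
  have hLin₁ : IsLinExt L₁ := hL₁ ▸ hL.trans_slide_up hx₂ hx hxlast
  obtain ⟨L', hL'⟩ : ∃ L', L' = L₁.trans (slide (L₁ w) (L₁ z₁)) := ⟨_, rfl⟩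
  have hpos' (u : X) : (L' u : ℕ) = slidePos (L₁ w) (L₁ z₁) (L₁ u) := hL' ▸ trans_slide_apply ..
  have hL'' : L' = (L.trans (slide (L x) (L z₂))).trans (slide (L₁ w) (L₁ z₁)) := by
    rw [hL', ← hL₁]
  obtain ⟨e₁, e₂, e₃⟩ : (L' z₁ : ℕ) = L z₁ + 1 ∧ (L' z₂ : ℕ) = L z₂ ∧ (L' z₃ : ℕ) = L z₃ := by
    simp only [hpos', f₁, f₂, f₃, fw, slidePos]
    refine ⟨?_, ?_, ?_⟩ <;> split_ifs <;> omega
  have hLin' : IsLinExt L' := hL' ▸ hLin₁.trans_slide_down (by omega) hw fun u h₁ h₂ => by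
    have := hpos₁ u
    rw [slidePos] at this
    refine hwfirst u ?_ ?_ <;> split_ifs at this <;> omega
  obtain ⟨i, hi⟩ : ∃ i : Fin k, (i : ℕ) = L x - L z₁ - 1 := ⟨⟨_, by omega⟩, rfl⟩
  obtain ⟨t, ht⟩ : ∃ t : Fin l, (t : ℕ) = L w - L z₂ := ⟨⟨_, by omega⟩, rfl⟩
  refine ⟨L', ⟨hLin', by omega, by omega⟩, false, i, t,
    widenGap_false_eq hL'' ?_ ?_ ?_ ?_⟩ <;> omega

end WidenGapCases

section WidenGapExists

variable {X : Type*} [PartialOrder X] {n k l : ℕ} {z₁ z₂ z₃ : X}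

theorem exists_widenGap_eq (h12 : z₁ < z₂) (h23 : z₂ < z₃) {M L : X ≃ Fin n}
    (hM : IsLinExtWithGaps z₁ z₂ z₃ k l M) (hL : IsLinExtWithGaps z₁ z₂ z₃ (k + 1) l L) :
    ∃ L', IsLinExtWithGaps z₁ z₂ z₃ k l L' ∧
      ∃ (b : Bool) (i : Fin k) (t : Fin l), widenGap z₁ z₂ z₃ L' b i t = L := by
  obtain ⟨hM, hM₂, hM₃⟩ := hM
  obtain ⟨hL, hL₂, hL₃⟩ := hL
  by_cases hgt : ∃ u, (L z₁ : ℕ) < L u ∧ (L u : ℕ) < L z₂ ∧ ¬ z₁ < u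
  · obtain ⟨x, hx₁, hx₂, hx, hfirst⟩ := exists_first_not_gt L z₁ _ hgt
    exact exists_widenGap_eq_of_not_gt hL hL₂ hL₃ h23 hx₁ hx₂ hx hfirst
  push Not at hgt
  obtain ⟨x, hx₁, hx₂, hx, hxlast⟩ := exists_last_not_lt L z₂ (L z₁ + 1) <| by
    by_contra! hlt
    have := hM.sub_le_sub_of_forall_between h12 (L := L) fun u h₁ h₂ =>
      ⟨hgt u h₁ h₂, hlt u h₁ h₂⟩
    omega
  by_cases hlt : ∃ u, (L z₁ : ℕ) + 1 ≤ L u ∧ (L u : ℕ) < L z₃ ∧ ¬ u < z₃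
  · obtain ⟨v, hv₁, hv₃, hv, hvlast⟩ := exists_last_not_lt L z₃ _ hlt
    have hv₂ : (L v : ℕ) ≠ L z₂ := fun h => hv (L.injective (Fin.ext h) ▸ h23)
    rcases hv₂.lt_or_gt with hv₂ | hv₂
    · exact exists_widenGap_eq_of_not_lt hL hL₂ hL₃ h23 hv₁ hv₂ hv hvlast
    · exact exists_widenGap_eq_of_not_lt_of_not_lt hL hL₂ hL₃ hx₁ hx₂ hx hxlast hv₂ hv₃ hv hvlast
  push Not at hlt
  obtain ⟨w, hw₁, hw₃, hw, hwfirst⟩ := exists_first_not_gt L z₁ (L z₃) <| by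
    by_contra! hgt'
    have := hM.sub_le_sub_of_forall_between (h12.trans h23) (L := L) fun u h₁ h₃ =>
      ⟨hgt' u h₁ h₃, hlt u h₁ h₃⟩
    omega
  have hw₂ : (L z₂ : ℕ) < L w := by
    by_contra! hw₂
    rcases hw₂.lt_or_eq with hw₂ | hw₂
    · exact hw (hgt w hw₁ hw₂)
    · exact hw (L.injective (Fin.ext hw₂) ▸ h12)
  exact exists_widenGap_eq_of_not_lt_of_not_gt hL hL₂ hL₃ hx₁ hx₂ hx hxlast hw₂ hw₃ hw hwfirst

end WidenGapExists

section NarrowGap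

variable {X : Type*} {n l : ℕ} (z₁ z₂ z₃ : X)

/-- Inverse of the moves made in `exists_narrowGap_eq`. For `t = 0`, the element just after `z₁`
(if `q ≤ L z₁`) or just before `z₂` (otherwise) is moved to position `q`; for `t ≠ 0`, the element
just before `z₃` is moved to position `q`, then the entry at position `L z₂ - 1` is moved `t`
places to the right. -/
def narrowGap (L : X ≃ Fin n) (q : Fin n) (t : Fin l) : X ≃ Fin n :=
  if (t : ℕ) = 0 then
    if (q : ℕ) ≤ L z₁ then L.trans (slide (L z₁ + 1) q) else L.trans (slide (L z₂ - 1) q)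
  else (L.trans (slide (L z₃ - 1) q)).trans (slide (L z₂ - 1) (L z₂ - 1 + t))

end NarrowGap

section NarrowGapCases

variable {X : Type*} [PartialOrder X] {n k l : ℕ} {z₁ z₂ z₃ : X} {L : X ≃ Fin n}

lemma exists_narrowGap_eq_of_not_lt (hL : IsLinExt L) (h₂ : (L z₂ : ℕ) = L z₁ + (k + 1))
    (h₃ : (L z₃ : ℕ) = L z₂ + l) (h23 : z₂ < z₃) {y : X} (hy₁ : (L y : ℕ) < L z₁) (hy : ¬ y < z₁)
    (hylast : ∀ u, (L y : ℕ) < L u → (L u : ℕ) < L z₁ → u < z₁) :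
    ∃ L', IsLinExtWithGaps z₁ z₂ z₃ (k + 2) l L' ∧
      ∃ (q : Fin n) (t : Fin l), narrowGap z₁ z₂ z₃ L' q t = L := by
  have h23' := hL.val_lt h23
  obtain ⟨L', hL'⟩ : ∃ L', L' = L.trans (slide (L y) (L z₁)) := ⟨_, rfl⟩
  obtain ⟨e₁, e₂, e₃⟩ : (L' z₁ : ℕ) = L z₁ - 1 ∧ (L' z₂ : ℕ) = L z₂ ∧ (L' z₃ : ℕ) = L z₃ := by
    simp only [hL', trans_slide_apply, slidePos]
    refine ⟨?_, ?_, ?_⟩ <;> split_ifs <;> omega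
  obtain ⟨t, ht⟩ : ∃ t : Fin l, (t : ℕ) = 0 := ⟨⟨0, by omega⟩, rfl⟩
  refine ⟨L', ⟨hL' ▸ hL.trans_slide_up hy₁ hy hylast, by omega, by omega⟩, L y, t, ?_⟩
  rw [narrowGap, if_pos ht, if_pos (by omega), show (L' z₁ : ℕ) + 1 = L z₁ by omega, hL',
    trans_slide_trans_slide_swap]

lemma exists_narrowGap_eq_of_not_gt (hL : IsLinExt L) (h₂ : (L z₂ : ℕ) = L z₁ + (k + 1))
    (h₃ : (L z₃ : ℕ) = L z₂ + l) (h23 : z₂ < z₃) {y : X} (hy₃ : (L z₃ : ℕ) < L y)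
    (hy : ¬ z₂ < y) (hyfirst : ∀ u, (L z₂ : ℕ) < L u → (L u : ℕ) < L y → z₂ < u) :
    ∃ L', IsLinExtWithGaps z₁ z₂ z₃ (k + 2) l L' ∧
      ∃ (q : Fin n) (t : Fin l), narrowGap z₁ z₂ z₃ L' q t = L := by
  have h23' := hL.val_lt h23
  obtain ⟨L', hL'⟩ : ∃ L', L' = L.trans (slide (L y) (L z₂)) := ⟨_, rfl⟩
  obtain ⟨e₁, e₂, e₃⟩ : (L' z₁ : ℕ) = L z₁ ∧ (L' z₂ : ℕ) = L z₂ + 1 ∧ (L' z₃ : ℕ) = L z₃ + 1 := by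
    simp only [hL', trans_slide_apply, slidePos]
    refine ⟨?_, ?_, ?_⟩ <;> split_ifs <;> omega
  obtain ⟨t, ht⟩ : ∃ t : Fin l, (t : ℕ) = 0 := ⟨⟨0, by omega⟩, rfl⟩
  refine ⟨L', ⟨hL' ▸ hL.trans_slide_down (by omega) hy hyfirst, by omega, by omega⟩, L y, t, ?_⟩
  rw [narrowGap, if_pos ht, if_neg (by omega), show (L' z₂ : ℕ) - 1 = L z₂ by omega, hL',
    trans_slide_trans_slide_swap]

lemma exists_narrowGap_eq_of_not_gt_of_not_gt (hL : IsLinExt L)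
    (h₂ : (L z₂ : ℕ) = L z₁ + (k + 1)) (h₃ : (L z₃ : ℕ) = L z₂ + l) {y v : X}
    (hy₂ : (L z₂ : ℕ) < L y) (hy₃ : (L y : ℕ) < L z₃) (hy : ¬ z₂ < y)
    (hyfirst : ∀ u, (L z₂ : ℕ) < L u → (L u : ℕ) < L y → z₂ < u)
    (hv₃ : (L z₃ : ℕ) < L v) (hv : ¬ z₃ < v)
    (hvfirst : ∀ u, (L z₃ : ℕ) < L u → (L u : ℕ) < L v → z₃ < u) :
    ∃ L', IsLinExtWithGaps z₁ z₂ z₃ (k + 2) l L' ∧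
      ∃ (q : Fin n) (t : Fin l), narrowGap z₁ z₂ z₃ L' q t = L := by
  obtain ⟨L₁, hL₁⟩ : ∃ L₁, L₁ = L.trans (slide (L y) (L z₂)) := ⟨_, rfl⟩
  have hpos₁ (u : X) : (L₁ u : ℕ) = slidePos (L y) (L z₂) (L u) := hL₁ ▸ trans_slide_apply ..
  obtain ⟨f₁, f₂, f₃, fv⟩ : (L₁ z₁ : ℕ) = L z₁ ∧ (L₁ z₂ : ℕ) = L z₂ + 1 ∧
      (L₁ z₃ : ℕ) = L z₃ ∧ (L₁ v : ℕ) = L v := by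
    simp only [hpos₁, slidePos]
    refine ⟨?_, ?_, ?_, ?_⟩ <;> split_ifs <;> omega
  have hLin₁ : IsLinExt L₁ := hL₁ ▸ hL.trans_slide_down hy₂ hy hyfirst
  obtain ⟨L', hL'⟩ : ∃ L', L' = L₁.trans (slide (L₁ v) (L₁ z₃)) := ⟨_, rfl⟩
  have hpos' (u : X) : (L' u : ℕ) = slidePos (L₁ v) (L₁ z₃) (L₁ u) := hL' ▸ trans_slide_apply ..
  obtain ⟨e₁, e₂, e₃⟩ : (L' z₁ : ℕ) = L z₁ ∧ (L' z₂ : ℕ) = L z₂ + 1 ∧ (L' z₃ : ℕ) = L z₃ + 1 := by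
    simp only [hpos', f₁, f₂, f₃, fv, slidePos]
    refine ⟨?_, ?_, ?_⟩ <;> split_ifs <;> omega
  have hLin' : IsLinExt L' := hL' ▸ hLin₁.trans_slide_down (by omega) hv fun u h₁ h₂ => by
    have := hpos₁ u
    rw [slidePos] at this
    refine hvfirst u ?_ ?_ <;> split_ifs at this <;> omega
  obtain ⟨t, ht⟩ : ∃ t : Fin l, (t : ℕ) = L y - L z₂ := ⟨⟨_, by omega⟩, rfl⟩
  refine ⟨L', ⟨hLin', by omega, by omega⟩, L v, t, ?_⟩
  rw [narrowGap, if_neg (by omega), show (L' z₃ : ℕ) - 1 = L₁ z₃ by omega,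
    show ((L v : Fin n) : ℕ) = L₁ v by omega, show (L' z₂ : ℕ) - 1 + t = L y by omega,
    show (L' z₂ : ℕ) - 1 = L z₂ by omega, hL', trans_slide_trans_slide_swap, hL₁,
    trans_slide_trans_slide_swap]

end NarrowGapCases

section NarrowGapExists

variable {X : Type*} [PartialOrder X] {n k l : ℕ} {z₁ z₂ z₃ : X}

theorem exists_narrowGap_eq (h12 : z₁ < z₂) (h23 : z₂ < z₃) {M L : X ≃ Fin n}
    (hM : IsLinExtWithGaps z₁ z₂ z₃ (k + 2) l M) (hL : IsLinExtWithGaps z₁ z₂ z₃ (k + 1) l L) :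
    ∃ L', IsLinExtWithGaps z₁ z₂ z₃ (k + 2) l L' ∧
      ∃ (q : Fin n) (t : Fin l), narrowGap z₁ z₂ z₃ L' q t = L := by
  obtain ⟨hM, hM₂, hM₃⟩ := hM
  obtain ⟨hL, hL₂, hL₃⟩ := hL
  by_cases hlt : ∃ u, (L u : ℕ) < L z₁ ∧ ¬ u < z₁
  · obtain ⟨y, -, hy₁, hy, hylast⟩ :=
      exists_last_not_lt L z₁ 0 (hlt.imp fun _ h => ⟨Nat.zero_le _, h⟩)
    exact exists_narrowGap_eq_of_not_lt hL hL₂ hL₃ h23 hy₁ hy hylast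
  push Not at hlt
  obtain ⟨y, hy₂, -, hy, hyfirst⟩ := exists_first_not_gt L z₂ n <| by
    by_contra! hgt
    have := hL.sub_le_sub_of_forall_outside hM h12 hlt fun u h => hgt u h (L u).2
    omega
  have hy₃ : (L y : ℕ) ≠ L z₃ := fun h => hy (L.injective (Fin.ext h) ▸ h23)
  rcases hy₃.lt_or_gt with hy₃ | hy₃
  · obtain ⟨v, hv₃, -, hv, hvfirst⟩ := exists_first_not_gt L z₃ n <| by
      by_contra! hgt
      have := hL.sub_le_sub_of_forall_outside hM (h12.trans h23) hlt fun u h => hgt u h (L u).2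
      omega
    exact exists_narrowGap_eq_of_not_gt_of_not_gt hL hL₂ hL₃ hy₂ hy₃ hy hyfirst hv₃ hv hvfirst
  · exact exists_narrowGap_eq_of_not_gt hL hL₂ hL₃ h23 hy₃ hy hyfirst

end NarrowGapExists

lemma natCard_subtype_le_mul {A D Y : Type*} [Finite A] [Finite D] (f : A → D → Y)
    {P : Y → Prop} (h : ∀ y, P y → ∃ a d, f a d = y) :
    Nat.card {y // P y} ≤ Nat.card A * Nat.card D := by
  choose a d hf using fun y : {y // P y} => h y.1 y.2
  rw [← Nat.card_prod]
  exact Nat.card_le_card_of_injective (fun y => (a y, d y)) fun y y' hyy' => by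
    simp only [Prod.mk.injEq] at hyy'
    exact Subtype.ext ((hf y).symm.trans (hyy'.1 ▸ hyy'.2 ▸ hf y'))

section Counting

variable {X : Type*} [PartialOrder X] [Finite X] {n k l : ℕ} {z₁ z₂ z₃ : X}

theorem natCard_withGaps_succ_le_two_mul (h12 : z₁ < z₂) (h23 : z₂ < z₃) {M : X ≃ Fin n}
    (hM : IsLinExtWithGaps z₁ z₂ z₃ k l M) :
    Nat.card {L : X ≃ Fin n // IsLinExtWithGaps z₁ z₂ z₃ (k + 1) l L} ≤
      2 * k * l * Nat.card {L : X ≃ Fin n // IsLinExtWithGaps z₁ z₂ z₃ k l L} := by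
  have := natCard_subtype_le_mul (P := IsLinExtWithGaps z₁ z₂ z₃ (k + 1) l)
    (fun (L' : {L' // IsLinExtWithGaps z₁ z₂ z₃ k l L'}) (d : Bool × Fin k × Fin l) =>
      widenGap z₁ z₂ z₃ L'.1 d.1 d.2.1 d.2.2)
    fun L hL => by
      obtain ⟨L', hL', b, i, t, rfl⟩ := exists_widenGap_eq h12 h23 hM hL
      exact ⟨⟨L', hL'⟩, (b, i, t), rfl⟩
  rw [Nat.card_prod, Nat.card_prod, Nat.card_fin, Nat.card_fin,
    Nat.card_eq_fintype_card (α := Bool), Fintype.card_bool] at this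
  linarith

theorem natCard_withGaps_succ_le_mul (h12 : z₁ < z₂) (h23 : z₂ < z₃) {M : X ≃ Fin n}
    (hM : IsLinExtWithGaps z₁ z₂ z₃ (k + 2) l M) :
    Nat.card {L : X ≃ Fin n // IsLinExtWithGaps z₁ z₂ z₃ (k + 1) l L} ≤
      n * l * Nat.card {L : X ≃ Fin n // IsLinExtWithGaps z₁ z₂ z₃ (k + 2) l L} := by
  have := natCard_subtype_le_mul (P := IsLinExtWithGaps z₁ z₂ z₃ (k + 1) l)
    (fun (L' : {L' // IsLinExtWithGaps z₁ z₂ z₃ (k + 2) l L'}) (d : Fin n × Fin l) =>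
      narrowGap z₁ z₂ z₃ L'.1 d.1 d.2)
    fun L hL => by
      obtain ⟨L', hL', q, t, rfl⟩ := exists_narrowGap_eq h12 h23 hM hL
      exact ⟨⟨L', hL'⟩, (q, t), rfl⟩
  rw [Nat.card_prod, Nat.card_fin, Nat.card_fin] at this
  linarith

end Counting

theorem Fk_squared_bound_general (X : Type) [PartialOrder X] [Fintype X]
    (n : ℕ) (hn : Fintype.card X = n)
    (z₁ z₂ z₃ : X) (h12 : z₁ < z₂) (h23 : z₂ < z₃)
    (k l : ℕ)
    (hpos : 0 < F X z₁ z₂ z₃ k l * F X z₁ z₂ z₃ (k + 2) l) :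
    F X z₁ z₂ z₃ (k + 1) l ^ 2 ≤
      2 * n * l ^ 2 * k * (F X z₁ z₂ z₃ k l * F X z₁ z₂ z₃ (k + 2) l) := by
  subst hn
  obtain ⟨⟨M, hM⟩, -⟩ := Nat.card_pos_iff.1 (Nat.pos_of_mul_pos_right hpos)
  obtain ⟨⟨M', hM'⟩, -⟩ := Nat.card_pos_iff.1 (Nat.pos_of_mul_pos_left hpos)
  calc F X z₁ z₂ z₃ (k + 1) l ^ 2 = F X z₁ z₂ z₃ (k + 1) l * F X z₁ z₂ z₃ (k + 1) l := sq _
    _ ≤ (2 * k * l * F X z₁ z₂ z₃ k l) * (Fintype.card X * l * F X z₁ z₂ z₃ (k + 2) l) :=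
      Nat.mul_le_mul (natCard_withGaps_succ_le_two_mul h12 h23 (M := M) hM)
        (natCard_withGaps_succ_le_mul h12 h23 (M := M') hM')
    _ = 2 * Fintype.card X * l ^ 2 * k * (F X z₁ z₂ z₃ k l * F X z₁ z₂ z₃ (k + 2) l) := by ring

theorem Fk_squared_bound (X : Type) [PartialOrder X] [Fintype X]
    (n : ℕ) (hn : Fintype.card X = n)
    (z₁ z₂ z₃ : X) (h12 : z₁ < z₂) (h23 : z₂ < z₃)
    (k l : ℕ) (hk : 1 ≤ k) (hl : 1 ≤ l)
    (hpos : 0 < F X z₁ z₂ z₃ k l * F X z₁ z₂ z₃ (k + 2) l) :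
    F X z₁ z₂ z₃ (k + 1) l ^ 2 ≤
      2 * n * l ^ 2 * k * (F X z₁ z₂ z₃ k l * F X z₁ z₂ z₃ (k + 2) l) :=
  Fk_squared_bound_general X n hn z₁ z₂ z₃ h12 h23 k l hpos
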